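/- Let p be a prime with p ≠ 3 and x ∈ ZMod p with x ≠ 0. Then ∑_{n=1}^{p-1} T_n(x) · ((-3)⁻¹)^n = (x² - 2x + 2)/x² in ZMod p, where T_n(x) denotes the n-th Touchard polynomial evaluated at x (reduced mod p). -/

import Mathlib

open Polynomial

/-- The Touchard polynomials in `ℤ[X]`, determined by `touchard 0 = 1` and
`touchard (n+1) = X * ∑_{k=0}^{n} C(n,k) * touchard k`. -/
noncomputable def touchard : ℕ → ℤ[X]
  | 0 => 1
  | n + 1 => X * ∑ k ∈ (Finset.range (n + 1)).attach, (n.choose k : ℤ[X]) * touchard k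
decreasing_by exact Finset.mem_range.mp k.2

/-!
Expanding in Stirling numbers of the second kind, `T_n(x) = ∑_k S(n,k) x^k`, and
`k! S(n,k) = Δ^k[t ↦ t^n](0)`. The factorials `k!` with `k < p` are units mod `p`, so for
`n < p` we get `T_n(x) = ∑_{k<p} x^k / k! · Δ^k[t ↦ t^n](0)` in `ZMod p`. Summing against
`y^n` for `1 ≤ n ≤ p - 1` and using linearity of `Δ^k` replaces `t^n` by `∑_n (yt)^n`, which
on `ZMod p` is minus the indicator of the point `y⁻¹`; the `k`-th difference at `0` of that
indicator is a signed binomial coefficient. For `y = (-3)⁻¹` the point is `p - 3`, so only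
`k = p - 3, p - 2, p - 1` contribute, and Wilson's theorem evaluates the three factorials.
-/

open Finset fwdDiff
open scoped Nat

theorem fwdDiff_iter_succ_apply {M G : Type*} [AddCommMonoid M] [AddCommGroup G] (h : M)
    (f : M → G) (k : ℕ) (y : M) :
    (Δ_[h])^[k + 1] f y = (Δ_[h])^[k] f (y + h) - (Δ_[h])^[k] f y := by
  rw [Function.iterate_succ_apply']
  rfl

section CommRing

variable {R : Type*} [CommRing R]

theorem fwdDiff_iter_succ_id_mul (g : R → R) (k : ℕ) :
    (Δ_[1])^[k + 1] (fun t ↦ t * g t) =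
      fun y ↦ y * (Δ_[1])^[k + 1] g y + (k + 1) * (Δ_[1])^[k] g (y + 1) := by
  induction k with
  | zero =>
    ext y
    simp only [zero_add, Function.iterate_one, Function.iterate_zero, id, fwdDiff]
    push_cast
    ring
  | succ k ih =>
    ext y
    rw [Function.iterate_succ_apply', ih, fwdDiff_iter_succ_apply _ _ (k + 1)]
    simp only [fwdDiff]
    push_cast
    linear_combination -(k + 1 : R) * fwdDiff_iter_succ_apply 1 g k (y + 1)

theorem fwdDiff_iter_succ_pow_succ_zero (n k : ℕ) :
    (Δ_[1])^[k + 1] (fun t : R ↦ t ^ (n + 1)) 0 =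
      (k + 1) * (Δ_[1])^[k] (fun t : R ↦ t ^ n) 1 := by
  simp_rw [pow_succ' _ n, fwdDiff_iter_succ_id_mul, zero_mul, zero_add]

theorem fwdDiff_iter_pow_one_eq_sum_choose (n k : ℕ) :
    (Δ_[1])^[k] (fun t : R ↦ t ^ n) 1 =
      ∑ j ∈ range (n + 1), n.choose j * (Δ_[1])^[k] (fun t : R ↦ t ^ j) 0 := by
  have hshift : (fun t : R ↦ (t + 1) ^ n) =
      ∑ j ∈ range (n + 1), n.choose j • fun t : R ↦ t ^ j := by
    ext t
    simp [add_pow, Finset.sum_apply, mul_comm]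
  have hcomp := fwdDiff_iter_comp_add (1 : R) (fun t : R ↦ t ^ n) 1 k 0
  rw [zero_add] at hcomp
  rw [← hcomp, hshift, fwdDiff_iter_finsetSum, Finset.sum_apply]
  simp only [fwdDiff_iter_const_smul, Pi.smul_apply]
  simp only [nsmul_eq_mul]

theorem factorial_mul_stirlingSecond (n k : ℕ) :
    (k ! * Nat.stirlingSecond n k : R) = (Δ_[1])^[k] (fun t : R ↦ t ^ n) 0 := by
  induction n generalizing k with
  | zero =>
    cases k with
    | zero => simp
    | succ k => rw [fwdDiff_iter_pow_eq_zero_of_lt k.succ_pos]; simp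
  | succ n ih =>
    cases k with
    | zero => simp
    | succ k =>
      have hstep := fwdDiff_iter_succ_apply (1 : R) (fun t : R ↦ t ^ n) k 0
      rw [zero_add, ← ih, ← ih, Nat.factorial_succ] at hstep
      rw [fwdDiff_iter_succ_pow_succ_zero, Nat.stirlingSecond_succ_succ, Nat.factorial_succ]
      push_cast at hstep ⊢
      linear_combination (k + 1 : R) * hstep

end CommRing

theorem Nat.stirlingSecond_succ_succ_eq_sum_choose (n k : ℕ) :
    Nat.stirlingSecond (n + 1) (k + 1) =
      ∑ j ∈ range (n + 1), n.choose j * Nat.stirlingSecond j k := by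
  apply Nat.eq_of_mul_eq_mul_left (k + 1).factorial_pos
  have h := factorial_mul_stirlingSecond (R := ℤ) (n + 1) (k + 1)
  rw [fwdDiff_iter_succ_pow_succ_zero, fwdDiff_iter_pow_one_eq_sum_choose] at h
  simp only [← factorial_mul_stirlingSecond] at h
  have hcancel : ((k + 1 : ℤ) * ∑ j ∈ range (n + 1), (n.choose j : ℤ) *
      (k ! * Nat.stirlingSecond j k)) =
      (k + 1)! * ∑ j ∈ range (n + 1), (n.choose j : ℤ) * Nat.stirlingSecond j k := by
    rw [mul_sum, mul_sum]
    push_cast [Nat.factorial_succ]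
    exact sum_congr rfl fun _ _ ↦ by ring
  exact_mod_cast h.trans hcancel

theorem sum_range_stirlingSecond_mul_of_lt {R : Type*} [Semiring R] {n N : ℕ} (h : n < N)
    (f : ℕ → R) :
    ∑ k ∈ range N, (Nat.stirlingSecond n k : R) * f k =
      ∑ k ∈ range (n + 1), (Nat.stirlingSecond n k : R) * f k :=
  (sum_subset (range_subset_range.2 h) fun k _ hk ↦ by
    rw [Nat.stirlingSecond_eq_zero_of_lt (by simpa using hk), Nat.cast_zero, zero_mul]).symm

theorem touchard_zero : touchard 0 = 1 := by rw [touchard]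

theorem touchard_succ (n : ℕ) :
    touchard (n + 1) = X * ∑ k ∈ range (n + 1), (n.choose k : ℤ[X]) * touchard k := by
  rw [touchard, sum_attach (range (n + 1)) fun k ↦ (n.choose k : ℤ[X]) * touchard k]

theorem touchard_eq_sum_stirlingSecond (n : ℕ) :
    touchard n = ∑ k ∈ range (n + 1), (Nat.stirlingSecond n k : ℤ[X]) * X ^ k := by
  induction n using Nat.strong_induction_on with
  | _ n ih =>
  cases n with
  | zero => simp [touchard_zero]
  | succ n =>
    have hinner : ∀ j ∈ range (n + 1), (n.choose j : ℤ[X]) * touchard j =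
        ∑ k ∈ range (n + 1),
          (n.choose j : ℤ[X]) * ((Nat.stirlingSecond j k : ℤ[X]) * X ^ k) := by
      intro j hj
      rw [ih j (mem_range.1 hj), ← sum_range_stirlingSecond_mul_of_lt (mem_range.1 hj), mul_sum]
    rw [touchard_succ, sum_congr rfl hinner, sum_comm, mul_sum, sum_range_succ' _ (n + 1)]
    simp only [Nat.stirlingSecond_succ_succ_eq_sum_choose, Nat.stirlingSecond_succ_zero]
    push_cast
    simp only [sum_mul, mul_sum, zero_mul, add_zero]
    refine sum_congr rfl fun k _ ↦ sum_congr rfl fun j _ ↦ by ring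

theorem FiniteField.sum_Icc_one_pow {K : Type*} [Field K] [Fintype K] [DecidableEq K] (u : K) :
    ∑ n ∈ Icc 1 (Fintype.card K - 1), u ^ n = if u = 1 then -1 else 0 := by
  have hsplit : ∑ n ∈ range (Fintype.card K), u ^ n =
      1 + ∑ n ∈ Icc 1 (Fintype.card K - 1), u ^ n := by
    rw [range_eq_Ico, sum_eq_sum_Ico_succ_bot Fintype.card_pos, pow_zero,
      ← Ico_add_one_right_eq_Icc, Nat.sub_one_add_one Fintype.card_ne_zero]
  split_ifs with hu
  · subst hu
    simp [Nat.cast_sub Fintype.card_pos]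
  · have hgeom := geom_sum_mul u (Fintype.card K)
    rw [FiniteField.pow_card, hsplit] at hgeom
    have := mul_right_cancel₀ (sub_ne_zero.2 hu) (hgeom.trans (one_mul _).symm)
    linear_combination this

theorem ZMod.fwdDiff_iter_ite_eq_natCast_zero {p k j : ℕ} (hk : k < p) (hj : j < p) :
    (Δ_[1])^[k] (fun t : ZMod p ↦ if t = j then 1 else 0) 0 =
      ((-1) ^ (k - j) * k.choose j : ZMod p) := by
  rw [fwdDiff_iter_eq_sum_shift]
  have hcast : ∀ i ∈ range (k + 1), ((0 : ZMod p) + i • 1 = j ↔ i = j) := fun i hi ↦ by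
    rw [zero_add, nsmul_one, ZMod.natCast_eq_natCast_iff', Nat.mod_eq_of_lt hj,
      Nat.mod_eq_of_lt (by have := mem_range.1 hi; omega)]
  simp only [smul_ite, smul_zero]
  rw [sum_congr rfl fun i hi ↦ if_congr (hcast i hi) rfl rfl, sum_ite_eq']
  split_ifs with hjk
  · simp
  · rw [Nat.choose_eq_zero_of_lt (by simpa using hjk)]; simp

section PrimeField

variable {p : ℕ} [hp : Fact p.Prime]

theorem ZMod.natCast_factorial_ne_zero {k : ℕ} (hk : k < p) : (k ! : ZMod p) ≠ 0 := by
  rw [Ne, ZMod.natCast_eq_zero_iff, hp.out.dvd_factorial]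
  omega

theorem ZMod.aeval_touchard_eq_sum_fwdDiff_iter (x : ZMod p) {n : ℕ} (hn : n < p) :
    aeval x (touchard n) =
      ∑ k ∈ range p, x ^ k / k ! * (Δ_[1])^[k] (fun t : ZMod p ↦ t ^ n) 0 := by
  rw [touchard_eq_sum_stirlingSecond]
  simp only [map_sum, map_mul, map_natCast, map_pow, aeval_X]
  rw [← sum_range_stirlingSecond_mul_of_lt hn]
  refine sum_congr rfl fun k hk ↦ ?_
  rw [← factorial_mul_stirlingSecond]
  field_simp [ZMod.natCast_factorial_ne_zero (mem_range.1 hk)]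

theorem sum_aeval_touchard_mul_inv_pow {j : ℕ} (hj0 : 0 < j) (hjp : j < p) (x : ZMod p) :
    ∑ n ∈ Icc 1 (p - 1), aeval x (touchard n) * ((j : ZMod p)⁻¹) ^ n =
      -∑ k ∈ range p, x ^ k / k ! * ((-1) ^ (k - j) * k.choose j : ZMod p) := by
  set y := (j : ZMod p)⁻¹
  have hj : (j : ZMod p) ≠ 0 := by
    rw [Ne, ZMod.natCast_eq_zero_iff]
    exact Nat.not_dvd_of_pos_of_lt hj0 hjp
  have hgeom : ∑ n ∈ Icc 1 (p - 1), y ^ n • (fun t : ZMod p ↦ t ^ n) =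
      (-1 : ZMod p) • fun t : ZMod p ↦ if t = j then (1 : ZMod p) else 0 := by
    ext t
    have := FiniteField.sum_Icc_one_pow (y * t)
    rw [ZMod.card] at this
    simp_rw [Finset.sum_apply, Pi.smul_apply, smul_eq_mul, ← mul_pow, this, y,
      inv_mul_eq_one₀ hj, eq_comm]
    split_ifs <;> simp
  have hdiff : ∀ k < p,
      ∑ n ∈ Icc 1 (p - 1), y ^ n * (Δ_[1])^[k] (fun t : ZMod p ↦ t ^ n) 0 =
        -((-1) ^ (k - j) * k.choose j : ZMod p) := fun k hk ↦ by
    have := congrFun (congrArg (Δ_[1])^[k] hgeom) 0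
    simp only [fwdDiff_iter_finsetSum, fwdDiff_iter_const_smul, Finset.sum_apply,
      Pi.smul_apply, smul_eq_mul] at this
    rw [this, ZMod.fwdDiff_iter_ite_eq_natCast_zero hk hjp, neg_one_mul]
  calc ∑ n ∈ Icc 1 (p - 1), aeval x (touchard n) * y ^ n
      = ∑ n ∈ Icc 1 (p - 1), ∑ k ∈ range p,
          x ^ k / k ! * (y ^ n * (Δ_[1])^[k] (fun t : ZMod p ↦ t ^ n) 0) := by
        refine sum_congr rfl fun n hn ↦ ?_
        rw [ZMod.aeval_touchard_eq_sum_fwdDiff_iter x (by have := (mem_Icc.1 hn).2; omega), sum_mul]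
        exact sum_congr rfl fun k _ ↦ by ring
    _ = ∑ k ∈ range p, x ^ k / k ! * -((-1) ^ (k - j) * k.choose j : ZMod p) := by
        rw [sum_comm]
        exact sum_congr rfl fun k hk ↦ by rw [← mul_sum, hdiff k (mem_range.1 hk)]
    _ = _ := by simp only [mul_neg, sum_neg_distrib]

end PrimeField

theorem ZMod.natCast_eq_neg_of_add (m k : ℕ) : (m : ZMod (m + k)) = -k := by
  have := ZMod.natCast_self (m + k)
  push_cast at this
  linear_combination this

theorem ZMod.sum_range_add_three_div_factorial_mul_choose {m : ℕ} [Fact (m + 3).Prime]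
    (x : ZMod (m + 3)) :
    ∑ k ∈ range (m + 3), x ^ k / k ! * ((-1) ^ (k - m) * k.choose m : ZMod (m + 3)) =
      -2 * x ^ m + 2 * x ^ (m + 1) - x ^ (m + 2) := by
  have hm : (m : ZMod (m + 3)) = -3 := by simpa using ZMod.natCast_eq_neg_of_add m 3
  have hf2 : ((m + 2)! : ZMod (m + 3)) = -1 := ZMod.wilsons_lemma (m + 3)
  have hf1 : ((m + 1)! : ZMod (m + 3)) = 1 := by
    rw [Nat.factorial_succ, Nat.cast_mul] at hf2
    push_cast at hf2
    linear_combination -hf2 + ((m + 1)! : ZMod (m + 3)) * hm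
  have hf0 : (m ! : ZMod (m + 3)) * -2 = 1 := by
    rw [Nat.factorial_succ, Nat.cast_mul] at hf1
    push_cast at hf1
    linear_combination hf1 - (m ! : ZMod (m + 3)) * hm
  have hc : ((m + 2).choose m : ZMod (m + 3)) = 1 := by
    have := Nat.choose_mul_factorial_mul_factorial (Nat.le_add_right m 2)
    rw [Nat.add_sub_cancel_left] at this
    have := congrArg (Nat.cast : ℕ → ZMod (m + 3)) this
    push_cast [Nat.factorial_two, hf2] at this
    linear_combination -this - ((m + 2).choose m : ZMod (m + 3)) * hf0
  rw [sum_range_succ, sum_range_succ, sum_range_succ, sum_eq_zero fun k hk ↦ by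
    rw [Nat.choose_eq_zero_of_lt (mem_range.1 hk)]; simp]
  simp only [Nat.sub_self, Nat.add_sub_cancel_left, Nat.choose_self, Nat.choose_succ_self_right,
    div_eq_mul_inv, inv_eq_of_mul_eq_one_right hf0, hf1, hf2, hc]
  push_cast
  rw [hm]
  ring

theorem touchard_sum_m_three (p : ℕ) [hp : Fact p.Prime] (hp3 : p ≠ 3)
    (x : ZMod p) (hx : x ≠ 0) :
    ∑ n ∈ Finset.Icc 1 (p - 1), (aeval x (touchard n)) * ((-3 : ZMod p)⁻¹) ^ n
      = (x ^ 2 - 2 * x + 2) / x ^ 2 := by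
  obtain rfl | ⟨m, rfl, hm⟩ : p = 2 ∨ ∃ m, p = m + 3 ∧ 0 < m := by
    have := hp.out.two_le
    have : p ≠ 4 := by rintro rfl; exact absurd hp.out (by decide)
    exact (eq_or_ne p 2).imp_right fun h ↦ ⟨p - 3, by omega, by omega⟩
  · obtain rfl : x = 1 := by simpa using ZMod.pow_card_sub_one_eq_one hx
    simp [touchard_succ, touchard_zero, show (3 : ZMod 2) = 1 from rfl]
  · have hfermat : x ^ (m + 2) = 1 := ZMod.pow_card_sub_one_eq_one hx
    rw [show (-3 : ZMod (m + 3)) = m by simpa using (ZMod.natCast_eq_neg_of_add m 3).symm,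
      sum_aeval_touchard_mul_inv_pow hm (by omega),
      ZMod.sum_range_add_three_div_factorial_mul_choose, eq_div_iff (pow_ne_zero 2 hx)]
    linear_combination (x ^ 2 - 2 * x + 2) * hfermat
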